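/- If U is a real-connected slice-domain in ℍ, then any two points p, q ∈ U can be joined by a concatenation of two slice preserving paths in U, i.e., there exist paths γ₁, γ₂ in U, each with image lying in a single slice ℂ_I ∩ U for some I ∈ 𝕊, such that γ₁(0) = p, γ₁(1) = γ₂(0), and γ₂(1) = q. -/

import Mathlib

/-!
Call a point of `U` reachable from `B ⊆ U` if a path inside one slice `U ∩ ℂ_I` joins it to a
point of `B`. When `B` contains every real point of `U`, reachability can be read off in each
slice separately: off `ℝ` a point lies in the single slice `ℂ_I = ℂ_{-I}`, and on `ℝ` it lies in
`B`. So the reachable points and the unreachable ones form, in every slice, unions of path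
components of the open set `U ∩ ℂ_I`; both are slice-open, and the connectedness of `U` makes
every point reachable. If `U` meets `ℝ`, take `B = U ∩ ℝ`: `p` and `q` reach real points, which
real-connectedness joins by a segment of `ℝ ⊆ ℂ_I`. Otherwise take `B = {p}`.
-/

noncomputable section

abbrev Hq := Quaternion ℝ

/-- The sphere of imaginary units of the quaternions. -/
def SphereS : Set Hq := {q | q ^ 2 = -1}

/-- The identification of `ℂ` with the slice plane `ℂ_I = ℝ + ℝI`. -/
def sliceEmb (I : Hq) : ℂ → Hq := fun z => (z.re : Hq) + (z.im : Hq) * I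

/-- The slice complex plane `ℂ_I = ℝ + ℝI`. -/
def sliceC (I : Hq) : Set Hq := Set.range (sliceEmb I)

/-- The slice-topology on the quaternions: the quotient topology induced by the
canonical map from the disjoint union of the slices, i.e. the supremum of the
topologies coinduced by the parametrizations of the slices. -/
def sliceTopology : TopologicalSpace Hq :=
  ⨆ I ∈ SphereS, TopologicalSpace.coinduced (sliceEmb I) inferInstance

/-- The real line inside the quaternions. -/
def realLine : Set Hq := Set.range (fun x : ℝ => (x : Hq))

/-- `g : ℂ → ℍ` (thought of as a function on the slice `ℂ_I`) is (left) holomorphic on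
`U`: real differentiable with `∂ₓ g + I ∂_y g = 0`. -/
def SliceHolomorphicOn (I : Hq) (g : ℂ → Hq) (U : Set ℂ) : Prop :=
  ∀ z ∈ U, ∃ L : ℂ →L[ℝ] Hq, HasFDerivAt g L z ∧ L 1 + I * L Complex.I = 0

/-- A function on a slice-open set is slice regular if it is holomorphic on each slice. -/
def SliceRegular (f : Hq → Hq) (Ω : Set Hq) : Prop :=
  ∀ I ∈ SphereS, SliceHolomorphicOn I (f ∘ sliceEmb I) (sliceEmb I ⁻¹' Ω)

/-- `K(m)` for `K ∈ 𝕊^N` (with `K 0 = 1` by convention) and `1 ≤ m ≤ 2^N`: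
`∏_{i=N}^{1} (K_i K_{i-1})^{m_i}` where `(m_N … m_1)₂` is the binary expansion of `m-1`. -/
def zetaTerm (K : ℕ → Hq) (N m : ℕ) : Hq :=
  ((List.range N).reverse.map
    (fun j => (K (j + 1) * K j) ^ (if Nat.testBit (m - 1) j then 1 else 0))).prod

/-- The matrix `σ_N` (0-indexed): entry `(i,j)` is `(-1)^{N+(j+1)}` if
`(i+1)+(j+1) = 2^N + 1`, and `0` otherwise. -/
def sigmaMat (N : ℕ) : Matrix (Fin (2 ^ N)) (Fin (2 ^ N)) ℝ :=
  Matrix.of fun i j =>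
    if (i : ℕ) + (j : ℕ) = 2 ^ N - 1 then (-1 : ℝ) ^ (N + (j : ℕ) + 1) else 0

def QOrth (I J : Hq) : Prop := (I * star J).re = 0

open Set ComplexConjugate

lemma isOpen_sliceTopology_iff {s : Set Hq} :
    @IsOpen Hq sliceTopology s ↔ ∀ I ∈ SphereS, IsOpen (sliceEmb I ⁻¹' s) := by
  unfold sliceTopology
  simp only [isOpen_iSup_iff, isOpen_coinduced]

lemma continuous_sliceEmb {I : Hq} (hI : I ∈ SphereS) :
    @Continuous ℂ Hq _ sliceTopology (sliceEmb I) :=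
  continuous_iSup_rng (i := I) (continuous_iSup_rng (i := hI) continuous_coinduced_rng)

lemma sliceEmb_eq_add_smul (I : Hq) (z : ℂ) : sliceEmb I z = z.re + z.im • I := by
  rw [sliceEmb, Quaternion.coe_mul_eq_smul]

@[simp]
lemma sliceEmb_ofReal (I : Hq) (r : ℝ) : sliceEmb I r = r := by
  simp [sliceEmb]

lemma sliceEmb_neg (I : Hq) (z : ℂ) : sliceEmb (-I) z = sliceEmb I (conj z) := by
  simp [sliceEmb]

lemma mul_self_eq_neg_one_of_mem_sphereS {I : Hq} (hI : I ∈ SphereS) : I * I = -1 := by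
  rw [← sq]; exact hI

lemma re_eq_zero_of_mem_sphereS {I : Hq} (hI : I ∈ SphereS) : I.re = 0 := by
  have h := mul_self_eq_neg_one_of_mem_sphereS hI
  have hre := congrArg QuaternionAlgebra.re h
  have hi := congrArg QuaternionAlgebra.imI h
  have hj := congrArg QuaternionAlgebra.imJ h
  have hk := congrArg QuaternionAlgebra.imK h
  simp [Quaternion.re_one, Quaternion.imI_one, Quaternion.imJ_one, Quaternion.imK_one]
    at hre hi hj hk
  have key : I.re ^ 2 * (I.re ^ 2 + 1) = 0 := by
    linear_combination I.re ^ 2 * hre + I.re * I.imI / 2 * hi + I.re * I.imJ / 2 * hj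
      + I.re * I.imK / 2 * hk
  nlinarith [sq_nonneg I.re]

lemma ne_zero_of_mem_sphereS {I : Hq} (hI : I ∈ SphereS) : I ≠ 0 := by
  rintro rfl
  simp [SphereS] at hI

lemma re_sliceEmb {I : Hq} (hI : I ∈ SphereS) (z : ℂ) : (sliceEmb I z).re = z.re := by
  simp [sliceEmb_eq_add_smul, re_eq_zero_of_mem_sphereS hI]

lemma eq_or_eq_neg_of_smul_eq_smul {I J : Hq} (hI : I ∈ SphereS) (hJ : J ∈ SphereS) {a b : ℝ}
    (h : a • I = b • J) (ha : a ≠ 0) : I = J ∨ I = -J := by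
  have hsq : a * a = b * b := by
    have := congrArg (fun x => (x * x).re) h
    simpa [smul_mul_smul, mul_self_eq_neg_one_of_mem_sphereS hI,
      mul_self_eq_neg_one_of_mem_sphereS hJ, Quaternion.re_one] using this
  rcases mul_self_eq_mul_self_iff.mp hsq with rfl | rfl
  · exact Or.inl (smul_right_injective Hq ha h)
  · exact Or.inr (smul_right_injective Hq ha (h.trans (neg_smul_neg b J).symm))

lemma sliceEmb_injective {I : Hq} (hI : I ∈ SphereS) : Function.Injective (sliceEmb I) := by
  intro z w h
  have hre : z.re = w.re := by rw [← re_sliceEmb hI z, ← re_sliceEmb hI w, h]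
  rw [sliceEmb_eq_add_smul, sliceEmb_eq_add_smul, hre, add_right_inj, ← sub_eq_zero,
    ← sub_smul, smul_eq_zero, sub_eq_zero] at h
  exact Complex.ext hre (h.resolve_right (ne_zero_of_mem_sphereS hI))

lemma sliceEmb_eq_coe_iff {I : Hq} (hI : I ∈ SphereS) {z : ℂ} {r : ℝ} :
    sliceEmb I z = r ↔ z = r := by
  rw [← sliceEmb_ofReal I r, (sliceEmb_injective hI).eq_iff]

lemma eq_or_eq_neg_of_sliceEmb_eq {I J : Hq} (hI : I ∈ SphereS) (hJ : J ∈ SphereS) {z w : ℂ}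
    (h : sliceEmb I z = sliceEmb J w) (hz : z.im ≠ 0) : I = J ∨ I = -J := by
  have hre : z.re = w.re := by rw [← re_sliceEmb hI z, ← re_sliceEmb hJ w, h]
  rw [sliceEmb_eq_add_smul, sliceEmb_eq_add_smul, hre, add_right_inj] at h
  exact eq_or_eq_neg_of_smul_eq_smul hI hJ h hz

/-- Off the real axis, two slices through the same point parametrize the same plane, up to
complex conjugation. -/
lemma exists_continuous_sliceEmb_eq_comp {I J : Hq} (hI : I ∈ SphereS) (hJ : J ∈ SphereS)
    {z w : ℂ} (h : sliceEmb I z = sliceEmb J w) (hz : z.im ≠ 0) :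
    ∃ f : ℂ → ℂ, Continuous f ∧ sliceEmb I = sliceEmb J ∘ f := by
  rcases eq_or_eq_neg_of_sliceEmb_eq hI hJ h hz with rfl | rfl
  · exact ⟨id, continuous_id, rfl⟩
  · exact ⟨conj, Complex.continuous_conj, funext (sliceEmb_neg J)⟩

lemma exists_mem_sphereS_mem_sliceC (x : Hq) : ∃ I ∈ SphereS, x ∈ sliceC I := by
  by_cases hx : x.im = 0
  · refine ⟨show Hq from ⟨0, 1, 0, 0⟩, ?_, x.re, ?_⟩
    · show _ ^ 2 = _
      rw [Quaternion.sq_eq_neg_normSq.mpr rfl, Quaternion.normSq_def']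
      norm_num
    · rw [sliceEmb_ofReal, ← Quaternion.re_add_im x, hx, add_zero, Quaternion.re_coe]
  · set n := ‖x.im‖
    have hn : n ≠ 0 := norm_ne_zero_iff.mpr hx
    refine ⟨n⁻¹ • x.im, ?_, ⟨x.re, n⟩, ?_⟩
    · show _ ^ 2 = _
      rw [smul_pow, Quaternion.im_sq, Quaternion.normSq_eq_norm_mul_self, smul_neg,
        Quaternion.smul_coe, inv_pow, sq, inv_mul_cancel₀ (mul_ne_zero hn hn), Quaternion.coe_one]
    · rw [sliceEmb_eq_add_smul, smul_smul, mul_inv_cancel₀ hn, one_smul, Quaternion.re_add_im]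

lemma IsOpen.diff_biUnion_pathComponentIn {X : Type*} [TopologicalSpace X]
    [LocallyPathConnectedSpace X] {F : Set X} (hF : IsOpen F) (S : Set X) :
    IsOpen (F \ ⋃ y ∈ S, pathComponentIn F y) := by
  refine isOpen_iff_mem_nhds.mpr fun x hx => ?_
  refine Filter.mem_of_superset (pathComponentIn_mem_nhds (hF.mem_nhds hx.1)) fun x' hx' => ?_
  refine ⟨pathComponentIn_subset hx', fun hx'S => hx.2 ?_⟩
  obtain ⟨y, hy, hyx'⟩ := mem_iUnion₂.mp hx'S
  exact mem_iUnion₂.mpr ⟨y, hy, JoinedIn.trans hyx' (JoinedIn.symm hx')⟩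

def sliceReach (U B : Set Hq) (I : Hq) : Set ℂ :=
  ⋃ w ∈ sliceEmb I ⁻¹' B, pathComponentIn (sliceEmb I ⁻¹' U) w

def reachBySlicePath (U B : Set Hq) : Set Hq :=
  ⋃ I ∈ SphereS, sliceEmb I '' sliceReach U B I

lemma mem_reachBySlicePath {U B : Set Hq} {x : Hq} :
    x ∈ reachBySlicePath U B ↔ ∃ I ∈ SphereS, ∃ w z : ℂ,
      sliceEmb I w ∈ B ∧ JoinedIn (sliceEmb I ⁻¹' U) w z ∧ sliceEmb I z = x := by
  simp only [reachBySlicePath, sliceReach, pathComponentIn, mem_iUnion₂, mem_image, mem_preimage,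
    exists_prop]
  aesop

lemma sliceReach_subset (U B : Set Hq) (I : Hq) : sliceReach U B I ⊆ sliceEmb I ⁻¹' U :=
  iUnion₂_subset fun _ _ => pathComponentIn_subset

/-- Since `B` contains the real points of `U`, where all slices meet, a point
of `ℂ_J` reached through some slice is reached through `ℂ_J` itself. -/
lemma preimage_reachBySlicePath {U B : Set Hq} (hB : ∀ r : ℝ, (r : Hq) ∈ U → (r : Hq) ∈ B)
    {J : Hq} (hJ : J ∈ SphereS) :
    sliceEmb J ⁻¹' reachBySlicePath U B = sliceReach U B J := by
  refine Subset.antisymm ?_ fun z hz => mem_biUnion hJ (mem_image_of_mem _ hz)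
  intro z hz
  obtain ⟨I, hI, z', hz', hzz'⟩ := mem_iUnion₂.mp hz
  obtain ⟨w, hwB, hwz'⟩ := mem_iUnion₂.mp hz'
  by_cases him : z'.im = 0
  · have hzU : sliceEmb J z ∈ U := hzz' ▸ sliceReach_subset U B I hz'
    have hreal : sliceEmb J z = (z'.re : Hq) := by
      rw [← hzz', sliceEmb_eq_add_smul, him, zero_smul, add_zero]
    refine mem_iUnion₂.mpr ⟨z, ?_, mem_pathComponentIn_self hzU⟩
    show sliceEmb J z ∈ B
    rw [hreal] at hzU ⊢
    exact hB _ hzU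
  · obtain ⟨f, hf, hIJ⟩ := exists_continuous_sliceEmb_eq_comp hI hJ hzz' him
    have hz : z = f z' := sliceEmb_injective hJ (by rw [← hzz', hIJ]; rfl)
    refine mem_iUnion₂.mpr ⟨f w, by simpa [hIJ] using hwB, hz ▸ (hwz'.map hf).mono ?_⟩
    rintro _ ⟨v, hv, rfl⟩
    simpa [hIJ] using hv

lemma isOpen_reachBySlicePath {U B : Set Hq} (hU : @IsOpen Hq sliceTopology U)
    (hB : ∀ r : ℝ, (r : Hq) ∈ U → (r : Hq) ∈ B) :
    @IsOpen Hq sliceTopology (reachBySlicePath U B) := by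
  refine isOpen_sliceTopology_iff.mpr fun J hJ => ?_
  rw [preimage_reachBySlicePath hB hJ]
  exact isOpen_biUnion fun w _ => (isOpen_sliceTopology_iff.mp hU J hJ).pathComponentIn w

lemma isOpen_diff_reachBySlicePath {U B : Set Hq} (hU : @IsOpen Hq sliceTopology U)
    (hB : ∀ r : ℝ, (r : Hq) ∈ U → (r : Hq) ∈ B) :
    @IsOpen Hq sliceTopology (U \ reachBySlicePath U B) := by
  refine isOpen_sliceTopology_iff.mpr fun J hJ => ?_
  rw [preimage_sdiff, preimage_reachBySlicePath hB hJ]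
  exact (isOpen_sliceTopology_iff.mp hU J hJ).diff_biUnion_pathComponentIn _

lemma subset_reachBySlicePath {U B : Set Hq} (hU : @IsOpen Hq sliceTopology U)
    (hconn : @IsPreconnected Hq sliceTopology U) (hBU : B ⊆ U) (hBne : B.Nonempty)
    (hB : ∀ r : ℝ, (r : Hq) ∈ U → (r : Hq) ∈ B) :
    U ⊆ reachBySlicePath U B := by
  obtain ⟨b, hb⟩ := hBne
  obtain ⟨I, hI, z, rfl⟩ := exists_mem_sphereS_mem_sliceC b
  have hbW : sliceEmb I z ∈ reachBySlicePath U B :=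
    mem_reachBySlicePath.mpr ⟨I, hI, z, z, hb, JoinedIn.refl (hBU hb), rfl⟩
  exact @IsPreconnected.subset_left_of_subset_union Hq sliceTopology _ _ _
    (isOpen_reachBySlicePath hU hB) (isOpen_diff_reachBySlicePath hU hB) disjoint_sdiff_right
    (union_sdiff_self.symm ▸ subset_union_right) ⟨_, hBU hb, hbW⟩ hconn

lemma joinedIn_ofReal {U : Set Hq} (hreal : IsPreconnected ((fun x : ℝ => (x : Hq)) ⁻¹' U))
    (I : Hq) {a b : ℝ} (ha : (a : Hq) ∈ U) (hb : (b : Hq) ∈ U) :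
    JoinedIn (sliceEmb I ⁻¹' U) (a : ℂ) (b : ℂ) := by
  have hab : JoinedIn ((fun x : ℝ => (x : Hq)) ⁻¹' U) a b :=
    JoinedIn.of_segment_subset (segment_eq_uIcc a b ▸ hreal.ordConnected.uIcc_subset ha hb)
  refine (hab.map Complex.continuous_ofReal).mono ?_
  rintro _ ⟨r, hr, rfl⟩
  simpa using hr

lemma exists_slicePath {U : Set Hq} {I : Hq} (hI : I ∈ SphereS) {a b : ℂ}
    (h : JoinedIn (sliceEmb I ⁻¹' U) a b) :
    ∃ γ : ℝ → Hq, @ContinuousOn ℝ Hq _ sliceTopology γ (Icc 0 1) ∧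
      γ 0 = sliceEmb I a ∧ γ 1 = sliceEmb I b ∧ ∀ t ∈ Icc (0 : ℝ) 1, γ t ∈ U ∩ sliceC I := by
  refine ⟨sliceEmb I ∘ h.somePath.extend,
    @Continuous.continuousOn ℝ Hq _ sliceTopology _ _ (@Continuous.comp ℝ ℂ Hq _ _ sliceTopology
      _ _ (continuous_sliceEmb hI) h.somePath.continuous_extend),
    by simp, by simp, fun t ht => ?_⟩
  rw [Function.comp_apply, Path.extend_apply _ ht]
  exact ⟨h.somePath_mem _, mem_range_self _⟩

lemma exists_two_slicePaths {U : Set Hq} {I₁ I₂ : Hq} (hI₁ : I₁ ∈ SphereS) (hI₂ : I₂ ∈ SphereS)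
    {a b c d : ℂ} (h₁ : JoinedIn (sliceEmb I₁ ⁻¹' U) a b) (h₂ : JoinedIn (sliceEmb I₂ ⁻¹' U) c d)
    (hbc : sliceEmb I₁ b = sliceEmb I₂ c) :
    ∃ J₁ ∈ SphereS, ∃ J₂ ∈ SphereS, ∃ γ₁ γ₂ : ℝ → Hq,
      @ContinuousOn ℝ Hq _ sliceTopology γ₁ (Icc 0 1) ∧
      @ContinuousOn ℝ Hq _ sliceTopology γ₂ (Icc 0 1) ∧
      γ₁ 0 = sliceEmb I₁ a ∧ γ₁ 1 = γ₂ 0 ∧ γ₂ 1 = sliceEmb I₂ d ∧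
      (∀ t ∈ Icc (0 : ℝ) 1, γ₁ t ∈ U ∩ sliceC J₁) ∧
      (∀ t ∈ Icc (0 : ℝ) 1, γ₂ t ∈ U ∩ sliceC J₂) := by
  obtain ⟨γ₁, hγ₁, hγ₁0, hγ₁1, hγ₁U⟩ := exists_slicePath hI₁ h₁
  obtain ⟨γ₂, hγ₂, hγ₂0, hγ₂1, hγ₂U⟩ := exists_slicePath hI₂ h₂
  exact ⟨I₁, hI₁, I₂, hI₂, γ₁, γ₂, hγ₁, hγ₂, hγ₁0, hγ₁1.trans (hbc.trans hγ₂0.symm), hγ₂1,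
    hγ₁U, hγ₂U⟩

theorem joined_by_two_slicePreserving_paths_general (U : Set Hq)
    (hopen : @IsOpen Hq sliceTopology U)
    (hconn : @IsPreconnected Hq sliceTopology U)
    (hreal : IsPreconnected ((fun x : ℝ => (x : Hq)) ⁻¹' U))
    (p q : Hq) (hp : p ∈ U) (hq : q ∈ U) :
    ∃ I₁ ∈ SphereS, ∃ I₂ ∈ SphereS, ∃ γ₁ γ₂ : ℝ → Hq,
      @ContinuousOn ℝ Hq _ sliceTopology γ₁ (Set.Icc 0 1) ∧
      @ContinuousOn ℝ Hq _ sliceTopology γ₂ (Set.Icc 0 1) ∧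
      γ₁ 0 = p ∧ γ₁ 1 = γ₂ 0 ∧ γ₂ 1 = q ∧
      (∀ t ∈ Set.Icc (0 : ℝ) 1, γ₁ t ∈ U ∩ sliceC I₁) ∧
      (∀ t ∈ Set.Icc (0 : ℝ) 1, γ₂ t ∈ U ∩ sliceC I₂) := by
  by_cases hR : ∃ r : ℝ, (r : Hq) ∈ U
  · have hreach := subset_reachBySlicePath (B := U ∩ realLine) hopen hconn inter_subset_left
      (hR.elim fun r hr => ⟨r, hr, r, rfl⟩) fun r hr => ⟨hr, r, rfl⟩
    obtain ⟨I₁, hI₁, w₁, z₁, ⟨ha, a, hw₁⟩, hp', rfl⟩ := mem_reachBySlicePath.mp (hreach hp)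
    obtain ⟨I₂, hI₂, w₂, z₂, ⟨hb, b, hw₂⟩, hq', rfl⟩ := mem_reachBySlicePath.mp (hreach hq)
    obtain rfl := (sliceEmb_eq_coe_iff hI₁).mp hw₁.symm
    obtain rfl := (sliceEmb_eq_coe_iff hI₂).mp hw₂.symm
    rw [sliceEmb_ofReal] at ha hb
    exact exists_two_slicePaths hI₁ hI₂ (hp'.symm.trans (joinedIn_ofReal hreal I₁ ha hb)) hq'
      (by simp)
  · have hreach := subset_reachBySlicePath hopen hconn (singleton_subset_iff.mpr hp)
      (singleton_nonempty p) fun r hr => absurd ⟨r, hr⟩ hR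
    obtain ⟨I, hI, w, z, rfl, hpq, rfl⟩ := mem_reachBySlicePath.mp (hreach hq)
    exact exists_two_slicePaths hI hI hpq (JoinedIn.refl hpq.target_mem) rfl

/-- In a real-connected slice-domain, any two points can be joined by the concatenation
of two slice preserving paths. -/
theorem joined_by_two_slicePreserving_paths (U : Set Hq)
    (hopen : @IsOpen Hq sliceTopology U)
    (hconn : @IsPreconnected Hq sliceTopology U)
    (hne : U.Nonempty)
    (hreal : IsPreconnected ((fun x : ℝ => (x : Hq)) ⁻¹' U))
    (p q : Hq) (hp : p ∈ U) (hq : q ∈ U) :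
    ∃ I₁ ∈ SphereS, ∃ I₂ ∈ SphereS, ∃ γ₁ γ₂ : ℝ → Hq,
      @ContinuousOn ℝ Hq _ sliceTopology γ₁ (Set.Icc 0 1) ∧
      @ContinuousOn ℝ Hq _ sliceTopology γ₂ (Set.Icc 0 1) ∧
      γ₁ 0 = p ∧ γ₁ 1 = γ₂ 0 ∧ γ₂ 1 = q ∧
      (∀ t ∈ Set.Icc (0 : ℝ) 1, γ₁ t ∈ U ∩ sliceC I₁) ∧
      (∀ t ∈ Set.Icc (0 : ℝ) 1, γ₂ t ∈ U ∩ sliceC I₂) :=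
  joined_by_two_slicePreserving_paths_general U hopen hconn hreal p q hp hq
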